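/- Let q : K ⥤ H be a functor between groupoids whose kernel R is principal (i.e., there is at most one arrow in R between any two objects, equivalently R is an equivalence-relation groupoid), and suppose q is full and a fibration. Then for arrows x, y of K, q(x) = q(y) if and only if there exist arrows r, r' in R with y = r' ∘ x ∘ r. -/
import Mathlib


open CategoryTheory

/-- A functor between groupoids is a *discrete fibration* if every arrow of the
target with source `f.obj x` admits a unique lift with source `x`. -/
def IsDiscreteFibration {H G : Type*} [CategoryTheory.Category H] [CategoryTheory.Category G]
    (f : H ⥤ G) : Prop :=
  ∀ (x : H) (c : G) (a : f.obj x ⟶ c),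
    ∃! e : Σ y : H, x ⟶ y,
      (⟨f.obj e.1, f.map e.2⟩ : Σ d : G, (f.obj x ⟶ d)) = ⟨c, a⟩

/-- A functor between groupoids is a *fibration* if every arrow of the
target with source `f.obj x` admits a (not necessarily unique) lift with source `x`. -/
def IsFibration {H G : Type*} [CategoryTheory.Category H] [CategoryTheory.Category G]
    (f : H ⥤ G) : Prop :=
  ∀ (x : H) (c : G) (a : f.obj x ⟶ c),
    ∃ e : Σ y : H, x ⟶ y,
      (⟨f.obj e.1, f.map e.2⟩ : Σ d : G, (f.obj x ⟶ d)) = ⟨c, a⟩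



/-- An arrow belongs to the *kernel* of a functor if it is sent to an identity arrow. -/
def InKer {K H : Type*} [CategoryTheory.Category K] [CategoryTheory.Category H]
    (q : K ⥤ H) {x y : K} (k : x ⟶ y) : Prop :=
  (⟨q.obj y, q.map k⟩ : Σ c : H, (q.obj x ⟶ c)) = ⟨q.obj x, 𝟙 (q.obj x)⟩

lemma inKer_iff {K H : Type*} [CategoryTheory.Category K] [CategoryTheory.Category H]
    (q : K ⥤ H) {x y : K} (k : x ⟶ y) :
    InKer q k ↔ ∃ h : q.obj x = q.obj y, q.map k = eqToHom h := by
  unfold InKer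
  rw [Sigma.mk.inj_iff]
  constructor
  · rintro ⟨h1, h2⟩
    refine ⟨h1.symm, ?_⟩
    rw [← conj_eqToHom_iff_heq' (q.map k) (𝟙 (q.obj x)) rfl h1.symm] at h2
    simpa using h2
  · rintro ⟨h, hk⟩
    refine ⟨h.symm, ?_⟩
    rw [hk]
    exact (conj_eqToHom_iff_heq' (eqToHom h) (𝟙 (q.obj x)) rfl h).mp (by simp)

theorem stmt19 {K H : Type*} [Groupoid K] [Groupoid H] (q : K ⥤ H)
    (hprincipal : ∀ {x y : K} (r r' : x ⟶ y), InKer q r → InKer q r' → r = r')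
    (hfull : q.Full) (hfib : IsFibration q) :
    ∀ {x₁ y₁ x₂ y₂ : K} (k : x₁ ⟶ y₁) (k' : x₂ ⟶ y₂),
      (⟨(q.obj x₁, q.obj y₁), q.map k⟩ : Σ p : H × H, (p.1 ⟶ p.2)) =
        ⟨(q.obj x₂, q.obj y₂), q.map k'⟩ ↔
      ∃ (r : x₂ ⟶ x₁) (r' : y₁ ⟶ y₂), InKer q r ∧ InKer q r' ∧ k' = r ≫ k ≫ r' := by
  intro x₁ y₁ x₂ y₂ k k'
  constructor
  · intro h
    obtain ⟨hp, hk⟩ := Sigma.mk.inj_iff.mp h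
    have hx : q.obj x₁ = q.obj x₂ := congrArg Prod.fst hp
    have hy : q.obj y₁ = q.obj y₂ := congrArg Prod.snd hp
    obtain ⟨r, hr⟩ := hfull.1 (eqToHom hx.symm : q.obj x₂ ⟶ q.obj x₁)
    obtain ⟨r', hr'⟩ := hfull.1 (eqToHom hy : q.obj y₁ ⟶ q.obj y₂)
    have hmap : q.map k' = eqToHom hx.symm ≫ q.map k ≫ eqToHom hy := by
      rw [conj_eqToHom_iff_heq' (q.map k') (q.map k) hx.symm hy]
      exact hk.symm
    refine ⟨r, r', (inKer_iff q r).mpr ⟨hx.symm, hr⟩, (inKer_iff q r').mpr ⟨hy, hr'⟩, ?_⟩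
    have hq : q.map (k' ≫ Groupoid.inv (r ≫ k ≫ r')) = 𝟙 (q.obj x₂) := by
      have h1 : q.map (r ≫ k ≫ r') = q.map k' := by
        simp [hr, hr', hmap]
      rw [Functor.map_comp, Groupoid.inv_eq_inv, Functor.map_inv,
        (IsIso.inv_eq_inv (f := q.map (r ≫ k ≫ r')) (g := q.map k')).mpr h1]
      simp
    have hc : InKer q (k' ≫ Groupoid.inv (r ≫ k ≫ r')) :=
      (inKer_iff q _).mpr ⟨rfl, by simpa using hq⟩
    have hid : InKer q (𝟙 x₂) := (inKer_iff q _).mpr ⟨rfl, by simp⟩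
    have heq1 := hprincipal _ _ hc hid
    calc k' = (k' ≫ Groupoid.inv (r ≫ k ≫ r')) ≫ (r ≫ k ≫ r') := by simp
    _ = 𝟙 x₂ ≫ (r ≫ k ≫ r') := by rw [heq1]
    _ = r ≫ k ≫ r' := by simp
  · rintro ⟨r, r', hrk, hrk', rfl⟩
    obtain ⟨hx, hr⟩ := (inKer_iff q r).mp hrk
    obtain ⟨hy, hr'⟩ := (inKer_iff q r').mp hrk'
    refine Sigma.mk.inj_iff.mpr ⟨Prod.ext hx.symm hy, ?_⟩
    refine ((conj_eqToHom_iff_heq' (q.map (r ≫ k ≫ r')) (q.map k) hx hy).mp ?_).symm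
    simp [hr, hr']
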